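/- Let P be a Borel probability measure on ℝ^d, let f satisfy Assumption (f), let G : ℝ^d → ℝ^{K×C} be bounded and measurable, let h_base : ℝ^d → Δ_C be measurable with inf_{x ∈ ℝ^d, c ∈ [C]} h_base_c(x) > 0, and let ζ > 0. Then the function A(λ) := E_{X∼P}[ D_f^conj(−G(X)ᵀλ, h_base(X)) ] + (ζ/2) E_{X∼P}[ ‖G(X)ᵀλ‖₂² + ‖λ‖₂² ] is real-valued, lower semicontinuous, and ζ-strongly convex on ℝ₊^K, and it has a unique minimizer λ_ζ* over ℝ₊^K. -/

import Mathlib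

open MeasureTheory

/-- The probability simplex in `ℝ^C`. -/
def simplex (C : ℕ) : Set (Fin C → ℝ) := {q | (∀ c, 0 ≤ q c) ∧ ∑ c, q c = 1}

/-- The relative interior `Δ_C⁺` of the probability simplex. -/
def simplexPos (C : ℕ) : Set (Fin C → ℝ) := {q | (∀ c, 0 < q c) ∧ ∑ c, q c = 1}

/-- The f-divergence `D_f(q‖p) = ∑_c p_c f(q_c / p_c)`. -/
noncomputable def fDiv {C : ℕ} (f : ℝ → ℝ) (q p : Fin C → ℝ) : ℝ :=
  ∑ c, p c * f (q c / p c)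

/-- The convex conjugate of `D_f(·‖p)`, `sup_q (vᵀq − D_f(q‖p))`; under
Assumption (f) (`f′(0⁺) = −∞`) the supremum over `Δ_C` equals the supremum over
the relative interior `Δ_C⁺`, which is used here. -/
noncomputable def fDivConj {C : ℕ} (f : ℝ → ℝ) (v p : Fin C → ℝ) : ℝ :=
  sSup ((fun q => ∑ c, v c * q c - fDiv f q p) '' simplexPos C)

section helpers

variable {C : ℕ} {f : ℝ → ℝ}

lemma simplex_coord_le_one {q : Fin C → ℝ} (hq : q ∈ simplex C) (c : Fin C) : q c ≤ 1 := by
  rw [← hq.2]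
  exact Finset.single_le_sum (fun i _ => hq.1 i) (Finset.mem_univ c)

lemma fDiv_self (hf_one : f 1 = 0) {p : Fin C → ℝ} (hp : p ∈ simplexPos C) :
    fDiv f p p = 0 :=
  Finset.sum_eq_zero fun c _ => by rw [div_self (hp.1 c).ne', hf_one, mul_zero]

lemma fDiv_nonneg' (hconv : ConvexOn ℝ (Set.Ioi 0) f) (hf_one : f 1 = 0)
    {q p : Fin C → ℝ} (hq : q ∈ simplexPos C) (hp : p ∈ simplexPos C) :
    0 ≤ fDiv f q p := by
  have h := hconv.map_sum_le (t := Finset.univ) (w := fun c => p c)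
      (p := fun c => q c / p c) (fun c _ => (hp.1 c).le) hp.2
      (fun c _ => Set.mem_Ioi.mpr (div_pos (hq.1 c) (hp.1 c)))
  have h1 : (∑ c, p c • (q c / p c)) = 1 := by
    rw [← hq.2]
    exact Finset.sum_congr rfl fun c _ => by
      rw [smul_eq_mul, mul_comm, div_mul_cancel₀ _ (hp.1 c).ne']
  rw [h1, hf_one] at h
  simpa [fDiv, smul_eq_mul] using h

lemma gfun_le (hconv : ConvexOn ℝ (Set.Ioi 0) f) (hf_one : f 1 = 0)
    {v p q : Fin C → ℝ} (hp : p ∈ simplexPos C) (hq : q ∈ simplexPos C) :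
    ∑ c, v c * q c - fDiv f q p ≤ ∑ c, |v c| := by
  have h1 : ∑ c, v c * q c ≤ ∑ c, |v c| := by
    refine Finset.sum_le_sum fun c _ => ?_
    calc v c * q c ≤ |v c * q c| := le_abs_self _
      _ = |v c| * |q c| := abs_mul _ _
      _ ≤ |v c| * 1 := by
          refine mul_le_mul_of_nonneg_left ?_ (abs_nonneg _)
          rw [abs_of_nonneg (hq.1 c).le]
          exact simplex_coord_le_one ⟨fun c => (hq.1 c).le, hq.2⟩ c
      _ = |v c| := mul_one _
  linarith [fDiv_nonneg' hconv hf_one hq hp]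

lemma bddAbove_gfun (hconv : ConvexOn ℝ (Set.Ioi 0) f) (hf_one : f 1 = 0)
    {v p : Fin C → ℝ} (hp : p ∈ simplexPos C) :
    BddAbove ((fun q => ∑ c, v c * q c - fDiv f q p) '' simplexPos C) := by
  refine ⟨∑ c, |v c|, ?_⟩
  rintro _ ⟨q, hq, rfl⟩
  exact gfun_le hconv hf_one hp hq

lemma fDivConj_le (hconv : ConvexOn ℝ (Set.Ioi 0) f) (hf_one : f 1 = 0)
    {v p : Fin C → ℝ} (hp : p ∈ simplexPos C) :
    fDivConj f v p ≤ ∑ c, |v c| := by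
  refine csSup_le ⟨_, ⟨p, hp, rfl⟩⟩ ?_
  rintro _ ⟨q, hq, rfl⟩
  exact gfun_le hconv hf_one hp hq

lemma le_fDivConj (hconv : ConvexOn ℝ (Set.Ioi 0) f) (hf_one : f 1 = 0)
    {v p : Fin C → ℝ} (hp : p ∈ simplexPos C) :
    -∑ c, |v c| ≤ fDivConj f v p := by
  have h2 : -∑ c, |v c| ≤ ∑ c, v c * p c - fDiv f p p := by
    rw [fDiv_self hf_one hp, sub_zero, ← Finset.sum_neg_distrib]
    refine Finset.sum_le_sum fun c _ => ?_
    have h3 : |v c * p c| ≤ |v c| := by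
      rw [abs_mul]
      calc |v c| * |p c| ≤ |v c| * 1 := by
            refine mul_le_mul_of_nonneg_left ?_ (abs_nonneg _)
            rw [abs_of_nonneg (hp.1 c).le]
            exact simplex_coord_le_one ⟨fun c => (hp.1 c).le, hp.2⟩ c
        _ = |v c| := mul_one _
    linarith [neg_abs_le (v c * p c)]
  exact h2.trans (le_csSup (bddAbove_gfun hconv hf_one hp) ⟨p, hp, rfl⟩)

lemma abs_fDivConj_le (hconv : ConvexOn ℝ (Set.Ioi 0) f) (hf_one : f 1 = 0)
    {v p : Fin C → ℝ} (hp : p ∈ simplexPos C) :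
    |fDivConj f v p| ≤ ∑ c, |v c| :=
  abs_le.mpr ⟨le_fDivConj hconv hf_one hp, fDivConj_le hconv hf_one hp⟩

end helpers

set_option maxHeartbeats 2000000 in
/-- Lemma 6 of the paper: the regularized population dual
objective `A(λ) = E[D_f^conj(−G(X)ᵀλ, h_base(X))] + (ζ/2) E[‖G(X)ᵀλ‖₂² + ‖λ‖₂²]`
is real-valued (the integrands being integrable), lower semicontinuous, and
`ζ`-strongly convex on the nonnegative orthant, and has a unique minimizer
`λ_ζ*` over the orthant. -/
theorem regularized_population_dual (d K C : ℕ)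
    (hd : 0 < d) (hK : 0 < K) (hC : 0 < C)
    (P : Measure (Fin d → ℝ)) [IsProbabilityMeasure P]
    (f f' f'' : ℝ → ℝ)
    (hf_deriv : ∀ t ∈ Set.Ioi (0 : ℝ), HasDerivAt f (f' t) t)
    (hf_deriv2 : ∀ t ∈ Set.Ioi (0 : ℝ), HasDerivAt f' (f'' t) t)
    (hf''_cont : ContinuousOn f'' (Set.Ioi 0))
    (hf''_pos : ∀ t ∈ Set.Ioi (0 : ℝ), 0 < f'' t)
    (hf_one : f 1 = 0)
    (hf'_atBot : Filter.Tendsto f' (nhdsWithin 0 (Set.Ioi 0)) Filter.atBot)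
    (G : (Fin d → ℝ) → Fin K → Fin C → ℝ)
    (hG_meas : ∀ k c, Measurable fun x => G x k c)
    (hG_bdd : ∃ M : ℝ, ∀ x k c, |G x k c| ≤ M)
    (hbase : (Fin d → ℝ) → Fin C → ℝ)
    (hbase_meas : ∀ c, Measurable fun x => hbase x c)
    (hbase_simplex : ∀ x, hbase x ∈ simplex C)
    (hbase_pos : ∃ ε > (0 : ℝ), ∀ x c, ε ≤ hbase x c)
    (ζ : ℝ) (hζ : 0 < ζ)
    (A : (Fin K → ℝ) → ℝ)
    (hA : ∀ lam, A lam =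
      (∫ x, fDivConj f (fun c => -∑ k, G x k c * lam k) (hbase x) ∂P) +
      (ζ / 2) * ∫ x, ((∑ c, (∑ k, G x k c * lam k) ^ 2) + ∑ k, lam k ^ 2) ∂P) :
    (∀ lam : Fin K → ℝ,
      Integrable (fun x => fDivConj f (fun c => -∑ k, G x k c * lam k) (hbase x)) P) ∧
    LowerSemicontinuousOn A {l : Fin K → ℝ | ∀ k, 0 ≤ l k} ∧
    ConvexOn ℝ {l : Fin K → ℝ | ∀ k, 0 ≤ l k}
      (fun lam => A lam - (ζ / 2) * ∑ k, lam k ^ 2) ∧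
    (∃! lam : Fin K → ℝ, (∀ k, 0 ≤ lam k) ∧
      IsMinOn A {l : Fin K → ℝ | ∀ k, 0 ≤ l k} lam) := by
  classical
  obtain ⟨M₀, hM₀⟩ := hG_bdd
  set M : ℝ := max M₀ 0 with hMdef
  have hM : ∀ x k c, |G x k c| ≤ M := fun x k c => (hM₀ x k c).trans (le_max_left _ _)
  have hMnn : 0 ≤ M := le_max_right _ _
  obtain ⟨ε, hε, hbase_lb⟩ := hbase_pos
  have hp_mem : ∀ x, hbase x ∈ simplexPos C :=
    fun x => ⟨fun c => lt_of_lt_of_le hε (hbase_lb x c), (hbase_simplex x).2⟩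
  -- convexity and continuity of f on (0, ∞)
  have hf_cont : ContinuousOn f (Set.Ioi 0) :=
    fun t ht => ((hf_deriv t ht).continuousAt).continuousWithinAt
  have hf'_contOn : ContinuousOn f' (Set.Ioi 0) :=
    fun t ht => ((hf_deriv2 t ht).continuousAt).continuousWithinAt
  have hderiv_eq : ∀ t ∈ Set.Ioi (0:ℝ), deriv f t = f' t :=
    fun t ht => (hf_deriv t ht).deriv
  have hf'_mono : MonotoneOn f' (Set.Ioi 0) := by
    refine (strictMonoOn_of_deriv_pos (convex_Ioi 0) hf'_contOn ?_).monotoneOn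
    intro t ht
    rw [interior_Ioi] at ht
    rw [(hf_deriv2 t ht).deriv]
    exact hf''_pos t ht
  have hconv : ConvexOn ℝ (Set.Ioi 0) f := by
    have hmono : MonotoneOn (deriv f) (interior (Set.Ioi (0:ℝ))) := by
      rw [interior_Ioi]
      intro a ha b hb hab
      rw [hderiv_eq a ha, hderiv_eq b hb]
      exact hf'_mono ha hb hab
    refine hmono.convexOn_of_deriv (convex_Ioi 0) hf_cont ?_
    rw [interior_Ioi]
    exact fun t ht => ((hf_deriv t ht).differentiableAt).differentiableWithinAt
  -- basic bounds
  have hvabs : ∀ (lam : Fin K → ℝ) x c, |(-∑ k, G x k c * lam k)| ≤ ∑ k, M * |lam k| := by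
    intro lam x c
    rw [abs_neg]
    calc |∑ k, G x k c * lam k| ≤ ∑ k, |G x k c * lam k| := Finset.abs_sum_le_sum_abs _ _
      _ ≤ ∑ k, M * |lam k| := Finset.sum_le_sum fun k _ => by
          rw [abs_mul]; exact mul_le_mul_of_nonneg_right (hM x k c) (abs_nonneg _)
  have hconj_abs : ∀ (lam : Fin K → ℝ) x,
      |fDivConj f (fun c => -∑ k, G x k c * lam k) (hbase x)| ≤ (C:ℝ) * ∑ k, M * |lam k| := by
    intro lam x
    refine (abs_fDivConj_le hconv hf_one (hp_mem x)).trans ?_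
    calc (∑ c, |(-∑ k, G x k c * lam k)|) ≤ ∑ _c : Fin C, ∑ k, M * |lam k| :=
          Finset.sum_le_sum fun c _ => hvabs lam x c
      _ = (C:ℝ) * ∑ k, M * |lam k| := by
          rw [Finset.sum_const, Finset.card_univ, Fintype.card_fin, nsmul_eq_mul]
  -- a countable dense subset of the positive simplex
  have hUmem : (fun _ : Fin C => (C:ℝ)⁻¹) ∈ simplexPos C := by
    constructor
    · intro c
      have : (0:ℝ) < C := Nat.cast_pos.mpr hC
      positivity
    · rw [Finset.sum_const, Finset.card_univ, Fintype.card_fin, nsmul_eq_mul]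
      exact mul_inv_cancel₀ (Nat.cast_ne_zero.mpr hC.ne')
  obtain ⟨t0, ht0c, ht0d⟩ := TopologicalSpace.exists_countable_dense (simplexPos C)
  set D : Set (Fin C → ℝ) := Subtype.val '' t0 with hDdef
  have hDsub : D ⊆ simplexPos C := by rintro _ ⟨q, hq, rfl⟩; exact q.2
  have hDcnt : D.Countable := ht0c.image _
  have hDdense : ∀ q ∈ simplexPos C, q ∈ closure D := by
    intro q hq
    have h1 : (⟨q, hq⟩ : simplexPos C) ∈ closure t0 := ht0d.closure_eq ▸ Set.mem_univ _
    exact image_closure_subset_closure_image continuous_subtype_val ⟨⟨q, hq⟩, h1, rfl⟩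
  have hDne : D.Nonempty := by
    by_contra h
    rw [Set.not_nonempty_iff_eq_empty] at h
    have := hDdense _ hUmem
    rw [h, closure_empty] at this
    exact this
  obtain ⟨e, he⟩ := Set.Countable.exists_eq_range hDcnt hDne
  have hemem : ∀ n, e n ∈ simplexPos C := fun n => hDsub (he ▸ Set.mem_range_self n)
  -- continuity of the inner objective on the positive simplex
  have hg_cont : ∀ (v p : Fin C → ℝ), p ∈ simplexPos C → ∀ q ∈ simplexPos C,
      ContinuousAt (fun q' => ∑ c, v c * q' c - fDiv f q' p) q := by
    intro v p hp q hq
    have h1 : ContinuousAt (fun q' : Fin C → ℝ => ∑ c, v c * q' c) q :=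
      (continuous_finset_sum _ fun c _ => continuous_const.mul (continuous_apply c)).continuousAt
    have h2 : ContinuousAt (fun q' : Fin C → ℝ => fDiv f q' p) q := by
      simp only [fDiv]
      refine tendsto_finset_sum _ fun c _ => Filter.Tendsto.const_mul _ ?_
      have hpos : 0 < q c / p c := div_pos (hq.1 c) (hp.1 c)
      have houter : ContinuousAt f (q c / p c) := (hf_deriv _ hpos).continuousAt
      have hinner : ContinuousAt (fun q' : Fin C → ℝ => q' c / p c) q := by
        have : Continuous (fun q' : Fin C → ℝ => q' c / p c) := by fun_prop
        exact this.continuousAt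
      exact ContinuousAt.comp (f := fun q' : Fin C → ℝ => q' c / p c) houter hinner
    exact h1.sub h2
  -- the conjugate as a countable supremum
  have hconj_eq : ∀ (v p : Fin C → ℝ), p ∈ simplexPos C →
      fDivConj f v p = ⨆ n : ℕ, (∑ c, v c * e n c - fDiv f (e n) p) := by
    intro v p hp
    have hbdd := bddAbove_gfun hconv hf_one (v := v) hp
    have hbddD : BddAbove ((fun q => ∑ c, v c * q c - fDiv f q p) '' D) :=
      hbdd.mono (Set.image_mono hDsub)
    have hrange : (fun q => ∑ c, v c * q c - fDiv f q p) '' D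
        = Set.range (fun n => ∑ c, v c * e n c - fDiv f (e n) p) := by
      rw [he, ← Set.range_comp]; rfl
    have hDneim : ((fun q => ∑ c, v c * q c - fDiv f q p) '' D).Nonempty := hDne.image _
    have hle1 : fDivConj f v p ≤ sSup ((fun q => ∑ c, v c * q c - fDiv f q p) '' D) := by
      refine csSup_le ⟨_, ⟨p, hp, rfl⟩⟩ ?_
      rintro _ ⟨q, hq, rfl⟩
      obtain ⟨u, hu, hulim⟩ := mem_closure_iff_seq_limit.mp (hDdense q hq)
      refine le_of_tendsto ((hg_cont v p hp q hq).tendsto.comp hulim) ?_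
      exact Filter.Eventually.of_forall fun n => le_csSup hbddD ⟨u n, hu n, rfl⟩
    have hge1 : sSup ((fun q => ∑ c, v c * q c - fDiv f q p) '' D) ≤ fDivConj f v p :=
      csSup_le_csSup hbdd hDneim (Set.image_mono hDsub)
    have : (⨆ n : ℕ, (∑ c, v c * e n c - fDiv f (e n) p))
        = sSup ((fun q => ∑ c, v c * q c - fDiv f q p) '' D) := by
      rw [hrange]; rfl
    rw [this]
    exact le_antisymm hle1 hge1
  -- measurability of each term
  have hFcont : ∀ (δ : ℝ), 0 < δ → Continuous (fun t : ℝ => f (max t δ)) := by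
    intro δ hδ
    rw [continuous_iff_continuousAt]
    intro t
    have h1 : ContinuousAt f (max t δ) :=
      (hf_deriv _ (lt_of_lt_of_le hδ (le_max_right t δ))).continuousAt
    have h2 : ContinuousAt (fun s : ℝ => max s δ) t :=
      (continuous_id.max continuous_const).continuousAt
    exact ContinuousAt.comp (f := fun s : ℝ => max s δ) h1 h2
  have hterm_meas : ∀ (lam : Fin K → ℝ) (n : ℕ),
      Measurable (fun x => ∑ c, (-∑ k, G x k c * lam k) * e n c - fDiv f (e n) (hbase x)) := by
    intro lam n
    apply Measurable.sub
    · exact Finset.measurable_sum _ fun c _ =>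
        ((Finset.measurable_sum _ fun k _ => (hG_meas k c).mul_const _).neg).mul_const _
    · simp only [fDiv]
      refine Finset.measurable_sum _ fun c _ => ?_
      have hδ : 0 < e n c := (hemem n).1 c
      have key : (fun x => hbase x c * f (e n c / hbase x c))
          = fun x => hbase x c * (fun t => f (max t (e n c))) (e n c / hbase x c) := by
        funext x
        have h1 : hbase x c ≤ 1 := simplex_coord_le_one (hbase_simplex x) c
        have h2 : 0 < hbase x c := (hp_mem x).1 c
        have h3 : e n c ≤ e n c / hbase x c := by
          rw [le_div_iff₀ h2]
          nlinarith
        simp only [max_eq_left h3]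
      rw [key]
      exact (hbase_meas c).mul
        ((hFcont _ hδ).measurable.comp (measurable_const.div (hbase_meas c)))
  have hconj_meas : ∀ lam : Fin K → ℝ,
      Measurable (fun x => fDivConj f (fun c => -∑ k, G x k c * lam k) (hbase x)) := by
    intro lam
    have heq : (fun x => fDivConj f (fun c => -∑ k, G x k c * lam k) (hbase x))
        = fun x => ⨆ n : ℕ, (∑ c, (-∑ k, G x k c * lam k) * e n c - fDiv f (e n) (hbase x)) := by
      funext x
      exact hconj_eq _ _ (hp_mem x)
    rw [heq]
    exact Measurable.iSup (hterm_meas lam)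
  have hconj_int : ∀ lam : Fin K → ℝ,
      Integrable (fun x => fDivConj f (fun c => -∑ k, G x k c * lam k) (hbase x)) P := by
    intro lam
    refine (integrable_const ((C:ℝ) * ∑ k, M * |lam k|)).mono'
      (hconj_meas lam).aestronglyMeasurable ?_
    exact Filter.Eventually.of_forall fun x => by
      rw [Real.norm_eq_abs]; exact hconj_abs lam x
  -- the quadratic part
  have hJ_meas : ∀ lam : Fin K → ℝ,
      Measurable (fun x => ∑ c, (∑ k, G x k c * lam k) ^ 2) := by
    intro lam
    exact Finset.measurable_sum _ fun c _ =>
      (Finset.measurable_sum _ fun k _ => (hG_meas k c).mul_const _).pow_const 2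
  have hJ_bd : ∀ (lam : Fin K → ℝ) x,
      (∑ c, (∑ k, G x k c * lam k) ^ 2) ≤ (C:ℝ) * (∑ k, M * |lam k|) ^ 2 := by
    intro lam x
    calc (∑ c, (∑ k, G x k c * lam k) ^ 2) ≤ ∑ _c : Fin C, (∑ k, M * |lam k|) ^ 2 := by
          refine Finset.sum_le_sum fun c _ => ?_
          rw [← sq_abs]
          refine pow_le_pow_left₀ (abs_nonneg _) ?_ 2
          have h := hvabs lam x c
          rwa [abs_neg] at h
      _ = (C:ℝ) * (∑ k, M * |lam k|) ^ 2 := by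
          rw [Finset.sum_const, Finset.card_univ, Fintype.card_fin, nsmul_eq_mul]
  have hJ_int : ∀ lam : Fin K → ℝ,
      Integrable (fun x => ∑ c, (∑ k, G x k c * lam k) ^ 2) P := by
    intro lam
    refine (integrable_const ((C:ℝ) * (∑ k, M * |lam k|) ^ 2)).mono'
      (hJ_meas lam).aestronglyMeasurable ?_
    refine Filter.Eventually.of_forall fun x => ?_
    rw [Real.norm_eq_abs, abs_of_nonneg (by positivity)]
    exact hJ_bd lam x
  -- decomposition of A
  have hAeq : ∀ lam : Fin K → ℝ, A lam =
      (∫ x, fDivConj f (fun c => -∑ k, G x k c * lam k) (hbase x) ∂P)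
      + (ζ/2) * (∫ x, (∑ c, (∑ k, G x k c * lam k) ^ 2) ∂P)
      + (ζ/2) * ∑ k, lam k ^ 2 := by
    intro lam
    rw [hA lam, integral_add (hJ_int lam) (integrable_const _), integral_const,
      probReal_univ, one_smul]
    ring
  -- pointwise convexity in λ
  have hsplit : ∀ x c (lam mu : Fin K → ℝ) (a b : ℝ),
      (∑ k, G x k c * (a • lam + b • mu) k)
        = a * (∑ k, G x k c * lam k) + b * (∑ k, G x k c * mu k) := by
    intro x c lam mu a b
    rw [Finset.mul_sum, Finset.mul_sum, ← Finset.sum_add_distrib]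
    refine Finset.sum_congr rfl fun k _ => ?_
    simp only [Pi.add_apply, Pi.smul_apply, smul_eq_mul]
    ring
  have hconj_cvx : ∀ x (lam mu : Fin K → ℝ) (a b : ℝ), 0 ≤ a → 0 ≤ b → a + b = 1 →
      fDivConj f (fun c => -∑ k, G x k c * (a • lam + b • mu) k) (hbase x)
        ≤ a * fDivConj f (fun c => -∑ k, G x k c * lam k) (hbase x)
          + b * fDivConj f (fun c => -∑ k, G x k c * mu k) (hbase x) := by
    intro x lam mu a b ha hb hab
    refine csSup_le ⟨_, ⟨hbase x, hp_mem x, rfl⟩⟩ ?_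
    rintro _ ⟨q, hq, rfl⟩
    have h1 : ∀ c : Fin C, -(∑ k, G x k c * (a • lam + b • mu) k) * q c
        = a * ((-∑ k, G x k c * lam k) * q c) + b * ((-∑ k, G x k c * mu k) * q c) := by
      intro c
      rw [hsplit x c lam mu a b]
      ring
    have heq : (∑ c, (-∑ k, G x k c * (a • lam + b • mu) k) * q c - fDiv f q (hbase x))
        = a * ((∑ c, (-∑ k, G x k c * lam k) * q c) - fDiv f q (hbase x))
          + b * ((∑ c, (-∑ k, G x k c * mu k) * q c) - fDiv f q (hbase x)) := by
      rw [Finset.sum_congr rfl fun c _ => h1 c, Finset.sum_add_distrib,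
        ← Finset.mul_sum, ← Finset.mul_sum]
      linear_combination (fDiv f q (hbase x)) * hab
    calc (∑ c, (-∑ k, G x k c * (a • lam + b • mu) k) * q c - fDiv f q (hbase x))
        = a * ((∑ c, (-∑ k, G x k c * lam k) * q c) - fDiv f q (hbase x))
          + b * ((∑ c, (-∑ k, G x k c * mu k) * q c) - fDiv f q (hbase x)) := heq
      _ ≤ a * fDivConj f (fun c => -∑ k, G x k c * lam k) (hbase x)
          + b * fDivConj f (fun c => -∑ k, G x k c * mu k) (hbase x) := by
          refine add_le_add ?_ ?_
          · exact mul_le_mul_of_nonneg_left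
              (le_csSup (bddAbove_gfun hconv hf_one (hp_mem x)) ⟨q, hq, rfl⟩) ha
          · exact mul_le_mul_of_nonneg_left
              (le_csSup (bddAbove_gfun hconv hf_one (hp_mem x)) ⟨q, hq, rfl⟩) hb
  have hJ_cvx : ∀ x (lam mu : Fin K → ℝ) (a b : ℝ), 0 ≤ a → 0 ≤ b → a + b = 1 →
      (∑ c, (∑ k, G x k c * (a • lam + b • mu) k) ^ 2)
        ≤ a * (∑ c, (∑ k, G x k c * lam k) ^ 2) + b * (∑ c, (∑ k, G x k c * mu k) ^ 2) := by
    intro x lam mu a b ha hb hab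
    rw [Finset.mul_sum, Finset.mul_sum, ← Finset.sum_add_distrib]
    refine Finset.sum_le_sum fun c _ => ?_
    rw [hsplit x c lam mu a b]
    have hb' : b = 1 - a := by linarith
    subst hb'
    nlinarith [mul_nonneg (mul_nonneg ha hb) (sq_nonneg ((∑ k, G x k c * lam k) - (∑ k, G x k c * mu k)))]
  -- convexity of the non-quadratic part of A
  have hPhi_cvx : ConvexOn ℝ Set.univ (fun lam : Fin K → ℝ =>
      (∫ x, fDivConj f (fun c => -∑ k, G x k c * lam k) (hbase x) ∂P)
      + (ζ/2) * ∫ x, (∑ c, (∑ k, G x k c * lam k) ^ 2) ∂P) := by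
    refine ⟨convex_univ, ?_⟩
    intro lam _ mu _ a b ha hb hab
    simp only [smul_eq_mul]
    have h1 : (∫ x, fDivConj f (fun c => -∑ k, G x k c * (a • lam + b • mu) k) (hbase x) ∂P)
        ≤ a * (∫ x, fDivConj f (fun c => -∑ k, G x k c * lam k) (hbase x) ∂P)
          + b * (∫ x, fDivConj f (fun c => -∑ k, G x k c * mu k) (hbase x) ∂P) := by
      rw [← integral_const_mul, ← integral_const_mul,
        ← integral_add ((hconj_int lam).const_mul a) ((hconj_int mu).const_mul b)]
      exact integral_mono (hconj_int _)
        (((hconj_int lam).const_mul a).add ((hconj_int mu).const_mul b))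
        (fun x => hconj_cvx x lam mu a b ha hb hab)
    have h2 : (∫ x, (∑ c, (∑ k, G x k c * (a • lam + b • mu) k) ^ 2) ∂P)
        ≤ a * (∫ x, (∑ c, (∑ k, G x k c * lam k) ^ 2) ∂P)
          + b * (∫ x, (∑ c, (∑ k, G x k c * mu k) ^ 2) ∂P) := by
      rw [← integral_const_mul, ← integral_const_mul,
        ← integral_add ((hJ_int lam).const_mul a) ((hJ_int mu).const_mul b)]
      exact integral_mono (hJ_int _)
        (((hJ_int lam).const_mul a).add ((hJ_int mu).const_mul b))
        (fun x => hJ_cvx x lam mu a b ha hb hab)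
    have h3 := mul_le_mul_of_nonneg_left h2 (by linarith : (0:ℝ) ≤ ζ/2)
    linarith
  -- strict convexity of the quadratic term
  have hQ_strict : StrictConvexOn ℝ Set.univ (fun lam : Fin K → ℝ => (ζ/2) * ∑ k, lam k ^ 2) := by
    refine ⟨convex_univ, ?_⟩
    intro x _ y _ hxy a b ha hb hab
    simp only [smul_eq_mul]
    have hb' : b = 1 - a := by linarith
    obtain ⟨k0, hk0⟩ := Function.ne_iff.mp hxy
    have hpos : 0 < ∑ k, (x k - y k) ^ 2 := by
      refine Finset.sum_pos' (fun k _ => sq_nonneg _) ⟨k0, Finset.mem_univ _, ?_⟩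
      have h := sub_ne_zero.mpr hk0
      positivity
    have key : ∑ k, ((a • x + b • y) k) ^ 2
        = a * ∑ k, x k ^ 2 + b * ∑ k, y k ^ 2 - (a * b) * ∑ k, (x k - y k) ^ 2 := by
      rw [Finset.mul_sum, Finset.mul_sum, Finset.mul_sum, ← Finset.sum_add_distrib,
        ← Finset.sum_sub_distrib]
      refine Finset.sum_congr rfl fun k _ => ?_
      simp only [Pi.add_apply, Pi.smul_apply, smul_eq_mul]
      subst hb'
      ring
    rw [key]
    nlinarith [mul_pos (mul_pos ha hb) hpos]
  have hQ_cont : Continuous (fun lam : Fin K → ℝ => (ζ/2) * ∑ k, lam k ^ 2) :=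
    continuous_const.mul (continuous_finset_sum _ fun k _ => (continuous_apply k).pow 2)
  have hA_eq_fun : A = fun lam : Fin K → ℝ =>
      ((∫ x, fDivConj f (fun c => -∑ k, G x k c * lam k) (hbase x) ∂P)
        + (ζ/2) * ∫ x, (∑ c, (∑ k, G x k c * lam k) ^ 2) ∂P)
      + (ζ/2) * ∑ k, lam k ^ 2 := by
    funext lam
    rw [hAeq lam]
  have hA_cvx : ConvexOn ℝ Set.univ A := by
    rw [hA_eq_fun]
    exact hPhi_cvx.add hQ_strict.convexOn
  have hA_cont : Continuous A := by
    rw [← continuousOn_univ]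
    exact ConvexOn.continuousOn isOpen_univ hA_cvx
  -- convexity of the orthant
  have hS_cvx : Convex ℝ {l : Fin K → ℝ | ∀ k, 0 ≤ l k} := by
    intro x hx y hy a b ha hb hab
    intro k
    have h1 : (a • x + b • y) k = a * x k + b * y k := by
      simp [Pi.add_apply, Pi.smul_apply, smul_eq_mul]
    rw [Set.mem_setOf_eq] at hx hy
    show 0 ≤ (a • x + b • y) k
    rw [h1]
    exact add_nonneg (mul_nonneg ha (hx k)) (mul_nonneg hb (hy k))
  have hA_strict : StrictConvexOn ℝ {l : Fin K → ℝ | ∀ k, 0 ≤ l k} A := by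
    rw [hA_eq_fun]
    exact (hPhi_cvx.subset (Set.subset_univ _) hS_cvx).add_strictConvexOn
      (hQ_strict.subset (Set.subset_univ _) hS_cvx)
  -- coercivity
  set c0 : ℝ := (C:ℝ) * M with hc0
  have hc0nn : 0 ≤ c0 := mul_nonneg (Nat.cast_nonneg _) hMnn
  have hA_lb : ∀ lam : Fin K → ℝ,
      (ζ/4) * (∑ k, lam k ^ 2) - (K:ℝ) * (c0 ^ 2 / ζ) ≤ A lam := by
    intro lam
    rw [hAeq lam]
    have hBeq : (C:ℝ) * ∑ k, M * |lam k| = ∑ k, c0 * |lam k| := by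
      rw [Finset.mul_sum]
      exact Finset.sum_congr rfl fun k _ => by rw [hc0]; ring
    have h1 : -(∑ k, c0 * |lam k|)
        ≤ ∫ x, fDivConj f (fun c => -∑ k, G x k c * lam k) (hbase x) ∂P := by
      have hnorm : ‖∫ x, fDivConj f (fun c => -∑ k, G x k c * lam k) (hbase x) ∂P‖
          ≤ ((C:ℝ) * ∑ k, M * |lam k|) * (P Set.univ).toReal :=
        norm_integral_le_of_norm_le_const (Filter.Eventually.of_forall fun x => by
          rw [Real.norm_eq_abs]; exact hconj_abs lam x)
      rw [measure_univ, ENNReal.toReal_one, mul_one, Real.norm_eq_abs, hBeq] at hnorm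
      linarith [neg_abs_le (∫ x, fDivConj f (fun c => -∑ k, G x k c * lam k) (hbase x) ∂P),
        abs_le.mp hnorm]
    have h2 : (0:ℝ) ≤ ∫ x, (∑ c, (∑ k, G x k c * lam k) ^ 2) ∂P :=
      integral_nonneg fun x => by positivity
    have h3 : ∀ k : Fin K, (ζ/4) * lam k ^ 2 - c0 ^ 2 / ζ ≤ -(c0 * |lam k|) + (ζ/2) * lam k ^ 2 := by
      intro k
      have hs2 : |lam k| ^ 2 = lam k ^ 2 := sq_abs _
      rw [← hs2]
      generalize |lam k| = s
      have key : ((ζ * s - 2 * c0) ^ 2) / (4 * ζ) = (ζ/4) * s ^ 2 + c0 ^ 2 / ζ - c0 * s := by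
        field_simp
        ring
      have hnn : (0:ℝ) ≤ ((ζ * s - 2 * c0) ^ 2) / (4 * ζ) :=
        div_nonneg (sq_nonneg _) (by linarith)
      rw [key] at hnn
      linarith
    calc (ζ/4) * (∑ k, lam k ^ 2) - (K:ℝ) * (c0 ^ 2 / ζ)
        = ∑ k, ((ζ/4) * lam k ^ 2 - c0 ^ 2 / ζ) := by
          rw [Finset.sum_sub_distrib, ← Finset.mul_sum, Finset.sum_const, Finset.card_univ,
            Fintype.card_fin, nsmul_eq_mul]
      _ ≤ ∑ k, (-(c0 * |lam k|) + (ζ/2) * lam k ^ 2) := Finset.sum_le_sum fun k _ => h3 k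
      _ = -(∑ k, c0 * |lam k|) + (ζ/2) * ∑ k, lam k ^ 2 := by
          rw [Finset.sum_add_distrib, ← Finset.sum_neg_distrib, ← Finset.mul_sum]
      _ ≤ (∫ x, fDivConj f (fun c => -∑ k, G x k c * lam k) (hbase x) ∂P)
          + (ζ/2) * (∫ x, (∑ c, (∑ k, G x k c * lam k) ^ 2) ∂P)
          + (ζ/2) * ∑ k, lam k ^ 2 := by nlinarith
  -- compact sublevel region and existence of a minimizer
  set R : ℝ := (4/ζ) * ((K:ℝ) * (c0 ^ 2 / ζ) + |A 0| + 1) with hRdef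
  have hRnn : 0 ≤ R := by
    have h1 : (0:ℝ) ≤ 4/ζ := div_nonneg (by norm_num) hζ.le
    have h2 : (0:ℝ) ≤ c0 ^ 2 / ζ := div_nonneg (sq_nonneg _) hζ.le
    rw [hRdef]
    exact mul_nonneg h1 (add_nonneg (add_nonneg (mul_nonneg (Nat.cast_nonneg _) h2)
      (abs_nonneg _)) zero_le_one)
  have hS_closed : IsClosed {l : Fin K → ℝ | ∀ k, 0 ≤ l k} := by
    have hset : {l : Fin K → ℝ | ∀ k, 0 ≤ l k}
        = ⋂ k, (fun l : Fin K → ℝ => l k) ⁻¹' Set.Ici 0 := by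
      ext l
      simp [Set.mem_iInter]
    rw [hset]
    exact isClosed_iInter fun k => isClosed_Ici.preimage (continuous_apply k)
  have hT_closed : IsClosed ({l : Fin K → ℝ | ∀ k, 0 ≤ l k} ∩ {l | ∑ k, l k ^ 2 ≤ R}) :=
    hS_closed.inter (isClosed_Iic.preimage
      (continuous_finset_sum _ fun k _ => (continuous_apply k).pow 2))
  have hT_bdd : Bornology.IsBounded
      ({l : Fin K → ℝ | ∀ k, 0 ≤ l k} ∩ {l | ∑ k, l k ^ 2 ≤ R}) := by
    refine (Metric.isBounded_closedBall (x := (0 : Fin K → ℝ)) (r := R + 1)).subset ?_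
    rintro l ⟨-, hl⟩
    rw [Metric.mem_closedBall, dist_zero_right]
    rw [pi_norm_le_iff_of_nonneg (by linarith)]
    intro k
    rw [Real.norm_eq_abs]
    have h1 : l k ^ 2 ≤ R :=
      le_trans (Finset.single_le_sum (fun i _ => sq_nonneg (l i)) (Finset.mem_univ k)) hl
    nlinarith [abs_nonneg (l k), sq_abs (l k), sq_nonneg (|l k| - 1)]
  have hT_cpt : IsCompact ({l : Fin K → ℝ | ∀ k, 0 ≤ l k} ∩ {l | ∑ k, l k ^ 2 ≤ R}) :=
    Metric.isCompact_of_isClosed_isBounded hT_closed hT_bdd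
  have h0S : (0 : Fin K → ℝ) ∈ {l : Fin K → ℝ | ∀ k, 0 ≤ l k} := fun k => le_refl 0
  have h0T : (0 : Fin K → ℝ) ∈ {l : Fin K → ℝ | ∀ k, 0 ≤ l k} ∩ {l | ∑ k, l k ^ 2 ≤ R} := by
    refine ⟨h0S, ?_⟩
    simp only [Set.mem_setOf_eq, Pi.zero_apply]
    simpa using hRnn
  obtain ⟨lam0, hlam0T, hlam0min⟩ := hT_cpt.exists_isMinOn ⟨0, h0T⟩ hA_cont.continuousOn
  have hmin_glob : IsMinOn A {l : Fin K → ℝ | ∀ k, 0 ≤ l k} lam0 := by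
    rw [isMinOn_iff]
    intro l hl
    by_cases hcase : ∑ k, l k ^ 2 ≤ R
    · exact (isMinOn_iff.mp hlam0min) l ⟨hl, hcase⟩
    · push_neg at hcase
      have h1 : A lam0 ≤ A 0 := (isMinOn_iff.mp hlam0min) 0 h0T
      have hRval : (ζ/4) * R = (K:ℝ) * (c0 ^ 2 / ζ) + |A 0| + 1 := by
        rw [hRdef]
        field_simp
      have h3 := hA_lb l
      have h4 : (ζ/4) * R < (ζ/4) * ∑ k, l k ^ 2 :=
        mul_lt_mul_of_pos_left hcase (by linarith)
      have h5 := le_abs_self (A 0)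
      linarith
  refine ⟨hconj_int, ?_, ?_, ?_⟩
  · exact hA_cont.lowerSemicontinuous.lowerSemicontinuousOn _
  · have hfun : (fun lam : Fin K → ℝ => A lam - (ζ/2) * ∑ k, lam k ^ 2)
        = fun lam : Fin K → ℝ =>
          (∫ x, fDivConj f (fun c => -∑ k, G x k c * lam k) (hbase x) ∂P)
          + (ζ/2) * ∫ x, (∑ c, (∑ k, G x k c * lam k) ^ 2) ∂P := by
      funext lam
      rw [hAeq lam]
      ring
    rw [hfun]
    exact hPhi_cvx.subset (Set.subset_univ _) hS_cvx
  · refine ⟨lam0, ⟨fun k => hlam0T.1 k, hmin_glob⟩, ?_⟩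
    rintro y ⟨hyS, hymin⟩
    exact hA_strict.eq_of_isMinOn hymin hmin_glob hyS hlam0T.1
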